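/- Let S and T be probabilistic rewrite systems such that for every term t, whenever {⟨t, 1⟩} ⇛_S μ1 and {⟨t, 1⟩} ⇛_T ν1 there exist equivalent term ensembles ω1 ≡ ω2 with μ1 ⇛_T ω1 and ν1 ⇛_S ω2. Then for all term ensembles τ, μ and ν such that τ ⇛_S μ and τ ⇛_T ν, there exist equivalent term ensembles ω1 ≡ ω2 such that μ ⇛_T ω1 and ν ⇛_S ω2. (In other words, single-term strong commutation of Det(S) and Det(T) up to equivalence lifts to strong commutation on arbitrary term ensembles.) -/

import Mathlib

/-!
Framework: probabilistic rewrite systems and term ensembles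
(following Díaz-Caro, Arrighi, Gadella, Grattage,
"Measurements and confluence in quantum lambda calculi with explicit qubits").
-/

universe u

/-- A probabilistic rewrite system on terms of type `Tm`:
`X t p t'` means `t` rewrites to `t'` with probability `p`. -/
def PRS (Tm : Type u) : Type u := Tm → ℝ → Tm → Prop

variable {Tm : Type u}

/-- The union of two probabilistic rewrite systems. -/
def PRS.union (R U : PRS Tm) : PRS Tm := fun t p t' => R t p t' ∨ U t p t'

/-- A single-term reduction produced by some rule of `X`, or the identity
with probability `1`. -/
def StepOrId (X : PRS Tm) (t : Tm) (p : ℝ) (t' : Tm) : Prop :=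
  X t p t' ∨ (p = 1 ∧ t' = t)

/-- `Expand X t l` : the single term `t` rewrites (by rules of `X`, or the identity)
into the finite family `l` of terms with positive probabilities summing to `1`. -/
def Expand (X : PRS Tm) (t : Tm) (l : List (Tm × ℝ)) : Prop :=
  (∀ q ∈ l, 0 < q.2 ∧ StepOrId X t q.2 q.1) ∧ (l.map Prod.snd).sum = 1

/-- `Det X` : the deterministic rewrite system on (indexed families representing)
term ensembles induced by the probabilistic rewrite system `X`:
`{⟨tᵢ, αᵢ⟩}ᵢ ⇛_X {⟨t'ᵢⱼ, αᵢ·γᵢⱼ⟩}ᵢⱼ` iff for each `i`, `tᵢ →_{γᵢⱼ} t'ᵢⱼ`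
and `∑ⱼ γᵢⱼ = 1`. -/
inductive Det (X : PRS Tm) : List (Tm × ℝ) → List (Tm × ℝ) → Prop
  | nil : Det X [] []
  | cons {t : Tm} {α : ℝ} {l τ τ' : List (Tm × ℝ)} :
      Expand X t l → Det X τ τ' →
      Det X ((t, α) :: τ) (l.map (fun q => (q.1, α * q.2)) ++ τ')

/-- A term ensemble: a finite indexed family of terms with positive
probabilities summing to `1`. -/
def IsEnsemble (τ : List (Tm × ℝ)) : Prop :=
  (∀ p ∈ τ, 0 < p.2) ∧ (τ.map Prod.snd).sum = 1

open Classical in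
/-- `sumprob τ s` : the sum of the probabilities attached to the occurrences
of the term `s` in the ensemble `τ`. -/
noncomputable def sumprob (τ : List (Tm × ℝ)) (s : Tm) : ℝ :=
  (τ.map (fun p => if p.1 = s then p.2 else 0)).sum

/-- Equivalence of term ensembles: `ω₁ ≡ ω₂` iff `min(ω₁) = min(ω₂)`, i.e.
merging duplicated terms by summing their probabilities yields the same result;
equivalently, every term carries the same total probability in both ensembles. -/
def EquivEns (ω₁ ω₂ : List (Tm × ℝ)) : Prop :=
  ∀ s : Tm, sumprob ω₁ s = sumprob ω₂ s

/-- A probabilistic rewrite system is strongly confluent if any two `Det`-steps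
from a term ensemble can be closed, up to equivalence, in one `Det`-step each. -/
def StronglyConfluent (X : PRS Tm) : Prop :=
  ∀ τ μ ν : List (Tm × ℝ), IsEnsemble τ → Det X τ μ → Det X τ ν →
    ∃ ω₁ ω₂ : List (Tm × ℝ), EquivEns ω₁ ω₂ ∧ Det X μ ω₁ ∧ Det X ν ω₂

/-- A probabilistic rewrite system is confluent if any two `Det`-reduction
sequences from a term ensemble can be closed, up to equivalence. -/
def Confluent (X : PRS Tm) : Prop :=
  ∀ τ μ ν : List (Tm × ℝ), IsEnsemble τ →
    Relation.ReflTransGen (Det X) τ μ → Relation.ReflTransGen (Det X) τ ν →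
    ∃ ω₁ ω₂ : List (Tm × ℝ), EquivEns ω₁ ω₂ ∧
      Relation.ReflTransGen (Det X) μ ω₁ ∧ Relation.ReflTransGen (Det X) ν ω₂

/-- Two probabilistic rewrite systems strongly commute if a `Det S`-step and a
`Det T`-step from a common term ensemble can be closed, up to equivalence,
by a `Det T`-step and a `Det S`-step respectively. -/
def StronglyCommute (S T : PRS Tm) : Prop :=
  ∀ τ μ ν : List (Tm × ℝ), IsEnsemble τ → Det S τ μ → Det T τ ν →
    ∃ ω₁ ω₂ : List (Tm × ℝ), EquivEns ω₁ ω₂ ∧ Det T μ ω₁ ∧ Det S ν ω₂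


lemma Det.append {X : PRS Tm} {σ σ' ρ ρ' : List (Tm × ℝ)}
    (h1 : Det X σ σ') (h2 : Det X ρ ρ') : Det X (σ ++ ρ) (σ' ++ ρ') := by
  induction h1 with
  | nil => simpa using h2
  | cons hE _ ih =>
    rw [List.cons_append, List.append_assoc]
    exact Det.cons hE ih

lemma Det.scale {X : PRS Tm} {τ τ' : List (Tm × ℝ)} (α : ℝ)
    (h : Det X τ τ') :
    Det X (τ.map (fun q => (q.1, α * q.2))) (τ'.map (fun q => (q.1, α * q.2))) := by
  induction h with
  | nil => exact Det.nil
  | @cons t β l σ σ' hE _ ih =>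
    have := Det.cons (α := α * β) hE ih
    simpa [List.map_map, List.map_append, Function.comp_def, mul_assoc] using this

lemma sumprob_append (ω₁ ω₂ : List (Tm × ℝ)) (s : Tm) :
    sumprob (ω₁ ++ ω₂) s = sumprob ω₁ s + sumprob ω₂ s := by
  simp [sumprob]

lemma sumprob_scale (α : ℝ) (ω : List (Tm × ℝ)) (s : Tm) :
    sumprob (ω.map (fun q => (q.1, α * q.2))) s = α * sumprob ω s := by
  simp only [sumprob, List.map_map, Function.comp]
  induction ω with
  | nil => simp
  | cons q l ih =>
    simp only [List.map_cons, List.sum_cons, ih, mul_add]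
    by_cases hq : q.1 = s <;> simp [hq]

/-- If `Det S` and `Det T` strongly commute, up to equivalence,
on every single-term ensemble `{⟨t, 1⟩}`, then they strongly commute on
arbitrary term ensembles. -/
theorem single_term_commutation_lifts {Tm : Type u} (S T : PRS Tm)
    (h : ∀ (t : Tm) (μ₁ ν₁ : List (Tm × ℝ)),
      Det S [(t, (1 : ℝ))] μ₁ → Det T [(t, (1 : ℝ))] ν₁ →
      ∃ ω₁ ω₂ : List (Tm × ℝ), EquivEns ω₁ ω₂ ∧ Det T μ₁ ω₁ ∧ Det S ν₁ ω₂) :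
    ∀ τ μ ν : List (Tm × ℝ), IsEnsemble τ → Det S τ μ → Det T τ ν →
      ∃ ω₁ ω₂ : List (Tm × ℝ), EquivEns ω₁ ω₂ ∧ Det T μ ω₁ ∧ Det S ν ω₂ := by
  intro τ μ ν _ hS hT
  clear * - h hS hT
  induction hS generalizing ν with
  | nil =>
    cases hT
    exact ⟨[], [], fun s => rfl, Det.nil, Det.nil⟩
  | @cons t α l τ₀ τ' hE hS' ih =>
    cases hT with
    | @cons _ _ l' _ ν' hE' hT' =>
      have hs : Det S [(t, (1 : ℝ))] l := by
        have := Det.cons (α := (1:ℝ)) hE Det.nil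
        simpa using this
      have ht : Det T [(t, (1 : ℝ))] l' := by
        have := Det.cons (α := (1:ℝ)) hE' Det.nil
        simpa using this
      obtain ⟨ω₁, ω₂, hw, hw1, hw2⟩ := h t l l' hs ht
      obtain ⟨ρ₁, ρ₂, hr, hr1, hr2⟩ := ih ν' hT'
      refine ⟨ω₁.map (fun q => (q.1, α * q.2)) ++ ρ₁,
              ω₂.map (fun q => (q.1, α * q.2)) ++ ρ₂, ?_, ?_, ?_⟩
      · intro s
        rw [sumprob_append, sumprob_append, sumprob_scale, sumprob_scale, hw s, hr s]
      · exact Det.append (Det.scale α hw1) hr1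
      · exact Det.append (Det.scale α hw2) hr2
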